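/- Let T be a Tambara functor on a finite group G and 𝔦 ⊆ T an ideal. Then the family of quotient rings T(X)/𝔦(X) carries a natural Tambara functor structure induced from T, and the projections T(X) → T(X)/𝔦(X) form a morphism of Tambara functors T → T/𝔦. In particular, the induced multiplicative transfer f_•(x + 𝔦(X)) = f_•(x) + 𝔦(Y) is well defined. -/

import Mathlib

set_option autoImplicit false

/-! Finite G-sets -/

structure GSet (G : Type) [Group G] : Type 1 where
  carrier : Type
  [mulAction : MulAction G carrier]
  [finite : Finite carrier]

attribute [instance] GSet.mulAction GSet.finite

/-- Equivariant maps of finite `G`-sets. -/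
structure GSetHom {G : Type} [Group G] (X Y : GSet G) : Type where
  toFun : X.carrier → Y.carrier
  map_smul : ∀ (g : G) (x : X.carrier), toFun (g • x) = g • toFun x

namespace GSetHom

variable {G : Type} [Group G]

def id (X : GSet G) : GSetHom X X := ⟨fun x => x, fun _ _ => rfl⟩

def comp {X Y Z : GSet G} (g : GSetHom Y Z) (f : GSetHom X Y) : GSetHom X Z :=
  ⟨fun x => g.toFun (f.toFun x), fun a x => by
    show g.toFun (f.toFun (a • x)) = a • g.toFun (f.toFun x)
    rw [f.map_smul, g.map_smul]⟩

end GSetHom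

namespace GSet

variable {G : Type} [Group G]

/-- Binary disjoint union of `G`-sets. -/
def sum (X Y : GSet G) : GSet G where
  carrier := X.carrier ⊕ Y.carrier

def inl (X Y : GSet G) : GSetHom X (X.sum Y) := ⟨Sum.inl, fun _ _ => rfl⟩

def inr (X Y : GSet G) : GSetHom Y (X.sum Y) := ⟨Sum.inr, fun _ _ => rfl⟩

instance : MulAction G Empty where
  smul _ x := x.elim
  one_smul x := x.elim
  mul_smul _ _ x := x.elim

/-- The empty `G`-set. -/
def empty (G : Type) [Group G] : GSet G where
  carrier := Empty

/-- Finite disjoint unions of `G`-sets. -/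
def sigma {n : ℕ} (Xs : Fin n → GSet G) : GSet G where
  carrier := Σ i, (Xs i).carrier

def sigmaIncl {n : ℕ} (Xs : Fin n → GSet G) (i : Fin n) : GSetHom (Xs i) (sigma Xs) :=
  ⟨fun x => ⟨i, x⟩, fun _ _ => rfl⟩

/-- The canonical pullback of two `G`-maps. -/
def pullback {X Y Z : GSet G} (f : GSetHom X Z) (g : GSetHom Y Z) : GSet G where
  carrier := { q : X.carrier × Y.carrier // f.toFun q.1 = g.toFun q.2 }
  mulAction :=
  { smul := fun a q => ⟨a • q.val, by
      show f.toFun (a • q.val.1) = g.toFun (a • q.val.2)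
      rw [f.map_smul, g.map_smul, q.property]⟩
    one_smul := fun q => Subtype.ext (one_smul G q.val)
    mul_smul := fun a b q => Subtype.ext (mul_smul a b q.val) }

def pbFst {X Y Z : GSet G} (f : GSetHom X Z) (g : GSetHom Y Z) :
    GSetHom (pullback f g) X := ⟨fun q => q.val.1, fun _ _ => rfl⟩

def pbSnd {X Y Z : GSet G} (f : GSetHom X Z) (g : GSetHom Y Z) :
    GSetHom (pullback f g) Y := ⟨fun q => q.val.2, fun _ _ => rfl⟩

/-- The complement of the image of a `G`-map, as a `G`-set. -/
def compl {X Y : GSet G} (f : GSetHom X Y) : GSet G where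
  carrier := { y : Y.carrier // ∀ x, f.toFun x ≠ y }
  mulAction :=
  { smul := fun g y => ⟨g • y.val, fun x h => y.property (g⁻¹ • x) (by
      rw [f.map_smul, h, inv_smul_smul])⟩
    one_smul := fun y => Subtype.ext (one_smul G y.val)
    mul_smul := fun a b y => Subtype.ext (mul_smul a b y.val) }

def complIncl {X Y : GSet G} (f : GSetHom X Y) : GSetHom (compl f) Y :=
  ⟨fun y => y.val, fun _ _ => rfl⟩

/-- Points of Tambara's dependent product `Π_f(A)`: pairs `(y, σ)` of a point `y : Y`
and a section `σ` of `p` on the fiber `f⁻¹(y)` (encoded as an `Option`-valued function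
supported exactly on the fiber). -/
def PiProp {X Y A : GSet G} (f : GSetHom X Y) (p : GSetHom A X)
    (s : Y.carrier × (X.carrier → Option A.carrier)) : Prop :=
  (∀ x, (s.2 x).isSome = true ↔ f.toFun x = s.1) ∧
  (∀ x a, s.2 x = some a → p.toFun a = x)

def PiCar {X Y A : GSet G} (f : GSetHom X Y) (p : GSetHom A X) : Type :=
  { s : Y.carrier × (X.carrier → Option A.carrier) // PiProp f p s }

instance optionFinite {α : Type} [Finite α] : Finite (Option α) :=
  Finite.of_equiv _ (Equiv.optionEquivSumPUnit.{0,0} α).symm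

instance piFinite {X Y A : GSet G} (f : GSetHom X Y) (p : GSetHom A X) :
    Finite (PiCar f p) := by
  unfold PiCar; infer_instance

def piSmul {X Y A : GSet G} (f : GSetHom X Y) (p : GSetHom A X) (g : G)
    (s : PiCar f p) : PiCar f p :=
  ⟨(g • s.val.1, fun x => (s.val.2 (g⁻¹ • x)).map (g • ·)), by
    constructor
    · intro x
      rw [Option.isSome_map, s.property.1 (g⁻¹ • x), f.map_smul]
      constructor
      · intro h; rw [← h, smul_inv_smul]
      · intro h; rw [h, inv_smul_smul]
    · intro x a ha
      rcases Option.map_eq_some_iff.mp ha with ⟨b, hb, rfl⟩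
      rw [p.map_smul, s.property.2 _ _ hb, smul_inv_smul]⟩

instance piAction {X Y A : GSet G} (f : GSetHom X Y) (p : GSetHom A X) :
    MulAction G (PiCar f p) where
  smul := piSmul f p
  one_smul s := by
    apply Subtype.ext
    refine Prod.ext (one_smul G s.val.1) ?_
    funext x
    show (s.val.2 ((1:G)⁻¹ • x)).map ((1:G) • ·) = s.val.2 x
    rw [inv_one, one_smul]
    cases h : s.val.2 x <;> simp [one_smul]
  mul_smul a b s := by
    apply Subtype.ext
    refine Prod.ext (mul_smul a b s.val.1) ?_
    funext x
    show (s.val.2 ((a * b)⁻¹ • x)).map ((a * b) • ·)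
        = ((s.val.2 (b⁻¹ • (a⁻¹ • x))).map (b • ·)).map (a • ·)
    rw [Option.map_map, mul_inv_rev, mul_smul]
    cases h : s.val.2 (b⁻¹ • a⁻¹ • x) <;> simp [mul_smul, Function.comp]

/-- Tambara's dependent product `Π_f(A)` as a `G`-set. -/
def piObj {X Y A : GSet G} (f : GSetHom X Y) (p : GSetHom A X) : GSet G where
  carrier := PiCar f p

/-- The projection `π : Π_f(A) → Y`. -/
def piPr {X Y A : GSet G} (f : GSetHom X Y) (p : GSetHom A X) :
    GSetHom (piObj f p) Y := ⟨fun s => s.val.1, fun _ _ => rfl⟩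

theorem optGet {α : Type} {o : Option α} {a : α} (h : o = some a) :
    ∀ hs : o.isSome = true, o.get hs = a := by subst h; intro _; rfl

/-- The evaluation map `λ : X ×_Y Π_f(A) → A`, `(x, (y, σ)) ↦ σ(x)`. -/
def piEval {X Y A : GSet G} (f : GSetHom X Y) (p : GSetHom A X) :
    GSetHom (pullback f (piPr f p)) A where
  toFun z := (z.val.2.val.2 z.val.1).get (by
    rw [z.val.2.property.1 z.val.1]; exact z.property)
  map_smul g z := by
    have hs : (z.val.2.val.2 z.val.1).isSome = true := by
      rw [z.val.2.property.1 z.val.1]; exact z.property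
    obtain ⟨a, ha⟩ := Option.isSome_iff_exists.mp hs
    have h1 : z.val.2.val.2 z.val.1 = some a := ha
    have h2 : (g • z).val.2.val.2 (g • z).val.1 = some (g • a) := by
      show (z.val.2.val.2 (g⁻¹ • (g • z.val.1))).map (g • ·) = some (g • a)
      rw [inv_smul_smul, h1]; rfl
    simp only [optGet h2, optGet h1]

end GSet

namespace GSet

/-- A transitive (nonempty) finite `G`-set. -/
def IsTransitive {G : Type} [Group G] (X : GSet G) : Prop :=
  Nonempty X.carrier ∧ MulAction.IsPretransitive G X.carrier

end GSet

/-! Tambara functors -/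

/-- The underlying system of commutative rings of a Tambara functor. -/
structure TamData (G : Type) [Group G] : Type 1 where
  obj : GSet G → Type
  ring : ∀ X, CommRing (obj X)

attribute [instance] TamData.ring

/-- A Tambara functor on the finite group `G`: a system of commutative rings `obj X`
indexed by finite `G`-sets, together with restrictions `res`, additive transfers `tr`
and multiplicative transfers `nm`, functorial, additive, satisfying the Mackey
base-change conditions, the projection formula, and Tambara's distributive law. -/
structure TambaraFunctor (G : Type) [Group G] extends TamData G where
  res : ∀ {X Y : GSet G}, GSetHom X Y → (obj Y →+* obj X)
  tr : ∀ {X Y : GSet G}, GSetHom X Y → (obj X →+ obj Y)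
  nm : ∀ {X Y : GSet G}, GSetHom X Y → (obj X →* obj Y)
  res_id : ∀ {X : GSet G} (x : obj X), res (GSetHom.id X) x = x
  res_comp : ∀ {X Y Z : GSet G} (f : GSetHom X Y) (g : GSetHom Y Z) (z : obj Z),
    res f (res g z) = res (g.comp f) z
  tr_id : ∀ {X : GSet G} (x : obj X), tr (GSetHom.id X) x = x
  tr_comp : ∀ {X Y Z : GSet G} (f : GSetHom X Y) (g : GSetHom Y Z) (x : obj X),
    tr g (tr f x) = tr (g.comp f) x
  nm_id : ∀ {X : GSet G} (x : obj X), nm (GSetHom.id X) x = x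
  nm_comp : ∀ {X Y Z : GSet G} (f : GSetHom X Y) (g : GSetHom Y Z) (x : obj X),
    nm g (nm f x) = nm (g.comp f) x
  /-- additivity on binary disjoint unions -/
  add_bij : ∀ X Y : GSet G, Function.Bijective
    (fun t : obj (X.sum Y) => (res (GSet.inl X Y) t, res (GSet.inr X Y) t))
  /-- `T(∅)` is the zero ring -/
  empty_subsingleton : ∀ x y : obj (GSet.empty G), x = y
  /-- Mackey base change for the additive transfer -/
  tr_bc : ∀ {X Y Z : GSet G} (f : GSetHom X Z) (g : GSetHom Y Z) (x : obj X),
    res g (tr f x) = tr (GSet.pbSnd f g) (res (GSet.pbFst f g) x)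
  /-- Mackey base change for the multiplicative transfer -/
  nm_bc : ∀ {X Y Z : GSet G} (f : GSetHom X Z) (g : GSetHom Y Z) (x : obj X),
    res g (nm f x) = nm (GSet.pbSnd f g) (res (GSet.pbFst f g) x)
  /-- the projection formula -/
  proj_formula : ∀ {X Y : GSet G} (f : GSetHom X Y) (a : obj X) (b : obj Y),
    tr f (a * res f b) = tr f a * b
  /-- the norm of zero is the additive transfer of `1` from the complement of the image -/
  nm_zero : ∀ {X Y : GSet G} (f : GSetHom X Y), nm f (0 : obj X) = tr (GSet.complIncl f) 1
  /-- Tambara's distributive law, via the canonical exponential diagram on `Π_f(A)` -/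
  distrib : ∀ {X Y A : GSet G} (f : GSetHom X Y) (p : GSetHom A X) (a : obj A),
    nm f (tr p a) = tr (GSet.piPr f p)
      (nm (GSet.pbSnd f (GSet.piPr f p)) (res (GSet.piEval f p) a))

namespace TambaraFunctor

variable {G : Type} [Group G]

/-- `f_!(x) = f_•(x) - f_•(0)`. -/
def shriek (T : TambaraFunctor G) {X Y : GSet G} (f : GSetHom X Y) (x : T.obj X) :
    T.obj Y := T.nm f x - T.nm f 0

end TambaraFunctor

/-- A morphism of Tambara functors: a family of ring homomorphisms natural with respect
to restrictions, additive transfers and multiplicative transfers. -/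
structure TamHom {G : Type} [Group G] (T S : TambaraFunctor G) where
  app : ∀ X : GSet G, T.obj X →+* S.obj X
  app_res : ∀ {X Y : GSet G} (f : GSetHom X Y) (y : T.obj Y),
    app X (T.res f y) = S.res f (app Y y)
  app_tr : ∀ {X Y : GSet G} (f : GSetHom X Y) (x : T.obj X),
    app Y (T.tr f x) = S.tr f (app X x)
  app_nm : ∀ {X Y : GSet G} (f : GSetHom X Y) (x : T.obj X),
    app Y (T.nm f x) = S.nm f (app X x)

namespace TambaraFunctor

variable {G : Type} [Group G]

/-- An ideal of a Tambara functor: a family of ideals closed under restrictions,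
additive transfers, and satisfying `f_•(𝔦(X)) ⊆ f_•(0) + 𝔦(Y)`
(equivalently, closed under `f_!`). -/
structure IsIdeal (T : TambaraFunctor G) (I : ∀ X : GSet G, Ideal (T.obj X)) : Prop where
  res_mem : ∀ {X Y : GSet G} (f : GSetHom X Y) {y : T.obj Y}, y ∈ I Y → T.res f y ∈ I X
  tr_mem : ∀ {X Y : GSet G} (f : GSetHom X Y) {x : T.obj X}, x ∈ I X → T.tr f x ∈ I Y
  shriek_mem : ∀ {X Y : GSet G} (f : GSetHom X Y) {x : T.obj X},
    x ∈ I X → T.shriek f x ∈ I Y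

/-- The ideal generated by a family of subsets: the intersection of all ideals
containing it. -/
def gen (T : TambaraFunctor G) (S : ∀ X : GSet G, Set (T.obj X)) (X : GSet G) :
    Ideal (T.obj X) :=
  ⨅ (I : ∀ Y : GSet G, Ideal (T.obj Y)) (_ : T.IsIdeal I) (_ : ∀ Y, S Y ⊆ ↑(I Y)), I X

/-- The family of subsets consisting of the single element `a ∈ T(A)`. -/
def single (T : TambaraFunctor G) (A : GSet G) (a : T.obj A) (X : GSet G) :
    Set (T.obj X) := { x | ∃ h : A = X, h ▸ a = x }

/-- The principal ideal `⟨a⟩` generated by `a ∈ T(A)`. -/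
def principal (T : TambaraFunctor G) (A : GSet G) (a : T.obj A) :
    ∀ X : GSet G, Ideal (T.obj X) := T.gen (T.single A a)

/-- The defining set of the product of two ideals. -/
def mulSet (T : TambaraFunctor G) (I J : ∀ X : GSet G, Ideal (T.obj X)) (X : GSet G) :
    Set (T.obj X) :=
  { x | ∃ (A : GSet G) (p : GSetHom A X) (a b : T.obj A),
      a ∈ I A ∧ b ∈ J A ∧ x = T.tr p (a * b) }

/-- The product of two ideals of a Tambara functor. -/
def mulIdl (T : TambaraFunctor G) (I J : ∀ X : GSet G, Ideal (T.obj X)) (X : GSet G) :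
    Ideal (T.obj X) := Ideal.span (T.mulSet I J X)

/-- Iterated products of ideals. -/
def mulMulti (T : TambaraFunctor G) :
    List (∀ X : GSet G, Ideal (T.obj X)) → ∀ X : GSet G, Ideal (T.obj X)
  | [] => fun _ => ⊤
  | I :: ls => T.mulIdl I (T.mulMulti ls)

/-- A prime ideal of a Tambara functor. -/
structure IsPrime (T : TambaraFunctor G) (P : ∀ X : GSet G, Ideal (T.obj X)) : Prop where
  isIdeal : T.IsIdeal P
  ne_top : ∃ X : GSet G, P X ≠ ⊤
  mem_or_mem : ∀ {X Y : GSet G}, X.IsTransitive → Y.IsTransitive →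
    ∀ {a : T.obj X} {b : T.obj Y},
      (∀ Z : GSet G, T.mulIdl (T.principal X a) (T.principal Y b) Z ≤ P Z) →
      a ∈ P X ∨ b ∈ P Y

/-- A maximal ideal of a Tambara functor. -/
structure IsMaximal (T : TambaraFunctor G) (M : ∀ X : GSet G, Ideal (T.obj X)) : Prop where
  isIdeal : T.IsIdeal M
  ne_top : ∃ X : GSet G, M X ≠ ⊤
  eq_of_le : ∀ K : ∀ X : GSet G, Ideal (T.obj X), T.IsIdeal K →
    (∀ X, M X ≤ K X) → (K = M ∨ ∀ X, K X = ⊤)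

end TambaraFunctor

namespace GSet

/-- The `G`-set `G/e`, i.e. `G` with the left regular action. -/
def regular (G : Type) [Group G] [Finite G] : GSet G where
  carrier := G

/-- Right multiplication `G/e → G/e`, an equivariant map. -/
def rightMul {G : Type} [Group G] [Finite G] (g : G) :
    GSetHom (regular G) (regular G) :=
  ⟨fun x => (id x : G) * g, fun a x => mul_assoc a x g⟩

end GSet

/-!
Restrictions and additive transfers descend to the quotient at once; the point is that the
norm `f_•` respects congruence modulo `𝔦`. Write `x + d` and `x` as the folds of `x ⊔ d` and
`x ⊔ 0` on `X ⊔ X`. The distributive law expands both norms as transfers of norms indexed by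
the sections of `X ⊔ X → X` over the fibres of `f`. Over the sections that never choose the
second summand the two norms agree. Over every other section, the element being normed lies
in `𝔦` on a sub-`G`-set meeting every fibre, and such a norm lies in `𝔦`: split that
sub-`G`-set off with complementary idempotents, and use that `f_•(𝔦) ⊆ 𝔦` for surjective `f`,
where `f_•(0) = 0`.
-/

namespace GSetHom

variable {G : Type} [Group G]

@[ext]
theorem ext {X Y : GSet G} {f g : GSetHom X Y} (h : ∀ x, f.toFun x = g.toFun x) : f = g := by
  cases f; cases g; congr; funext x; exact h x

theorem exists_comp_eq {A C V : GSet G} (u : GSetHom A V) (hu : Function.Injective u.toFun)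
    (c : GSetHom C V) (hc : ∀ z, ∃ a, u.toFun a = c.toFun z) :
    ∃ m : GSetHom C A, u.comp m = c := by
  choose m hm using hc
  refine ⟨⟨m, fun g z => hu ?_⟩, GSetHom.ext hm⟩
  rw [hm, c.map_smul, u.map_smul, hm]

theorem exists_inverse {A B : GSet G} (u : GSetHom A B) (hu : Function.Bijective u.toFun) :
    ∃ v : GSetHom B A, u.comp v = GSetHom.id B ∧ v.comp u = GSetHom.id A := by
  obtain ⟨v, hv⟩ := u.exists_comp_eq hu.1 (GSetHom.id B) hu.2
  have hv' : ∀ b, u.toFun (v.toFun b) = b := fun b => congrArg (·.toFun b) hv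
  exact ⟨v, hv, GSetHom.ext fun a => hu.1 (hv' (u.toFun a))⟩

end GSetHom

namespace GSet

variable {G : Type} [Group G]

theorem pullback_condition {X Y Z : GSet G} (f : GSetHom X Z) (g : GSetHom Y Z) :
    f.comp (pbFst f g) = g.comp (pbSnd f g) :=
  GSetHom.ext fun q => q.property

theorem pbSnd_injective {X Y Z : GSet G} {f : GSetHom X Z} (hf : Function.Injective f.toFun)
    (g : GSetHom Y Z) : Function.Injective (pbSnd f g).toFun := by
  rintro ⟨⟨x, y⟩, hxy⟩ ⟨⟨x', y'⟩, hxy'⟩ (rfl : y = y')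
  obtain rfl : x = x' := hf (hxy.trans hxy'.symm)
  rfl

theorem pbFst_eq_pbSnd {X Z : GSet G} {f : GSetHom X Z} (hf : Function.Injective f.toFun) :
    pbFst f f = pbSnd f f :=
  GSetHom.ext fun q => hf q.property

theorem isEmpty_pullback {X Y Z : GSet G} {f : GSetHom X Z} {g : GSetHom Y Z}
    (hfg : ∀ x y, f.toFun x ≠ g.toFun y) : IsEmpty (pullback f g).carrier :=
  ⟨fun q => hfg _ _ q.property⟩

theorem complIncl_injective {X Y : GSet G} (f : GSetHom X Y) :
    Function.Injective (complIncl f).toFun :=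
  fun _ _ h => Subtype.ext h

theorem complIncl_ne {X Y : GSet G} (f : GSetHom X Y) (x : X.carrier) (y : (compl f).carrier) :
    f.toFun x ≠ (complIncl f).toFun y :=
  fun h => y.property x h

/-- The part of `Y` hit by `f`, realised as the complement of the complement of its image. -/
abbrev image {X Y : GSet G} (f : GSetHom X Y) : GSet G := compl (complIncl f)

abbrev imageIncl {X Y : GSet G} (f : GSetHom X Y) : GSetHom (image f) Y :=
  complIncl (complIncl f)

theorem exists_eq_imageIncl {X Y : GSet G} (f : GSetHom X Y) (y : (image f).carrier) :
    ∃ x, f.toFun x = (imageIncl f).toFun y := by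
  by_contra! h
  exact y.property ⟨y.val, h⟩ rfl

def complSumImage {X Y : GSet G} (f : GSetHom X Y) : GSetHom ((compl f).sum (image f)) Y :=
  ⟨Sum.elim Subtype.val Subtype.val, by rintro g (y | y) <;> rfl⟩

theorem exists_section_complSumImage {X Y : GSet G} (f : GSetHom X Y) :
    ∃ m : GSetHom Y ((compl f).sum (image f)), (complSumImage f).comp m = GSetHom.id Y := by
  refine (complSumImage f).exists_comp_eq ?_ _ fun y => ?_
  · rintro (y | y) (y' | y') h
    · exact congrArg Sum.inl (Subtype.ext h)
    · exact absurd h (complIncl_ne _ y y')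
    · exact absurd h.symm (complIncl_ne _ y' y)
    · exact congrArg Sum.inr (Subtype.ext h)
  · by_cases hy : ∀ x, f.toFun x ≠ y
    · exact ⟨Sum.inl ⟨y, hy⟩, rfl⟩
    · refine ⟨Sum.inr ⟨y, fun ω hω => hy fun x hx => ?_⟩, rfl⟩
      exact ω.property x (hx.trans hω.symm)

theorem inl_injective (X Y : GSet G) : Function.Injective (inl X Y).toFun := Sum.inl_injective

theorem inr_injective (X Y : GSet G) : Function.Injective (inr X Y).toFun := Sum.inr_injective

def fold (X : GSet G) : GSetHom (X.sum X) X :=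
  ⟨Sum.elim id id, by rintro g (x | x) <;> rfl⟩

theorem fold_comp_inl (X : GSet G) : (fold X).comp (inl X X) = GSetHom.id X := rfl

theorem fold_comp_inr (X : GSet G) : (fold X).comp (inr X X) = GSetHom.id X := rfl

end GSet

namespace TambaraFunctor

open GSet

variable {G : Type} [Group G] (T : TambaraFunctor G)

theorem subsingleton_obj_of_isEmpty (E : GSet G) [IsEmpty E.carrier] : Subsingleton (T.obj E) := by
  let toEmpty : GSetHom E (GSet.empty G) := ⟨isEmptyElim, fun _ => isEmptyElim⟩
  let ofEmpty : GSetHom (GSet.empty G) E := ⟨Empty.elim, fun _ x => x.elim⟩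
  have hid : ofEmpty.comp toEmpty = GSetHom.id E := GSetHom.ext isEmptyElim
  have key (c : T.obj E) : T.res toEmpty (T.res ofEmpty c) = c := by
    rw [T.res_comp, hid, T.res_id]
  exact ⟨fun a b => by rw [← key a, ← key b, T.empty_subsingleton (T.res ofEmpty a)]⟩

theorem tr_of_isEmpty {E Y : GSet G} [IsEmpty E.carrier] (f : GSetHom E Y) (a : T.obj E) :
    T.tr f a = 0 := by
  have := T.subsingleton_obj_of_isEmpty E
  rw [Subsingleton.elim a 0, map_zero]

theorem nm_of_isEmpty {E Y : GSet G} [IsEmpty E.carrier] (f : GSetHom E Y) (a : T.obj E) :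
    T.nm f a = 1 := by
  have := T.subsingleton_obj_of_isEmpty E
  rw [Subsingleton.elim a 1, map_one]

theorem res_tr_of_disjoint {X Y Z : GSet G} {f : GSetHom X Z} {g : GSetHom Y Z}
    (hfg : ∀ x y, f.toFun x ≠ g.toFun y) (a : T.obj X) : T.res g (T.tr f a) = 0 := by
  have := isEmpty_pullback hfg
  rw [T.tr_bc, tr_of_isEmpty]

theorem res_nm_of_disjoint {X Y Z : GSet G} {f : GSetHom X Z} {g : GSetHom Y Z}
    (hfg : ∀ x y, f.toFun x ≠ g.toFun y) (a : T.obj X) : T.res g (T.nm f a) = 1 := by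
  have := isEmpty_pullback hfg
  rw [T.nm_bc, nm_of_isEmpty]

theorem nm_zero_of_surjective {X Y : GSet G} (f : GSetHom X Y) (hf : Function.Surjective f.toFun) :
    T.nm f 0 = 0 := by
  have : IsEmpty (compl f).carrier := ⟨fun y => (hf y.val).elim y.property⟩
  rw [T.nm_zero, tr_of_isEmpty]

theorem mul_tr_one {X Y : GSet G} (f : GSetHom X Y) (a : T.obj Y) :
    a * T.tr f 1 = T.tr f (T.res f a) := by
  rw [mul_comm, ← T.proj_formula, one_mul]

theorem res_complIncl_tr_complIncl {X Y : GSet G} (f : GSetHom X Y) (a : T.obj (compl f)) :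
    T.res (complIncl f) (T.tr (complIncl f) a) = a := by
  have hone : T.tr (pbSnd (complIncl f) (complIncl f)) 1 = 1 := by
    rw [← map_one (T.res (pbFst _ _)), ← T.tr_bc, ← T.nm_zero,
      res_nm_of_disjoint _ (complIncl_ne f)]
  rw [T.tr_bc, pbFst_eq_pbSnd (complIncl_injective f), ← one_mul (T.res _ a), T.proj_formula,
    hone, one_mul]

theorem res_complIncl_tr_imageIncl {X Y : GSet G} (f : GSetHom X Y) (a : T.obj (image f)) :
    T.res (complIncl f) (T.tr (imageIncl f) a) = 0 :=
  T.res_tr_of_disjoint (fun y y' h => complIncl_ne _ y' y h.symm) a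

theorem res_imageIncl_tr_complIncl {X Y : GSet G} (f : GSetHom X Y) (a : T.obj (compl f)) :
    T.res (imageIncl f) (T.tr (complIncl f) a) = 0 :=
  T.res_tr_of_disjoint (complIncl_ne _) a

theorem eq_of_res_complIncl_eq_of_res_imageIncl_eq {X Y : GSet G} (f : GSetHom X Y)
    {s t : T.obj Y} (h₁ : T.res (complIncl f) s = T.res (complIncl f) t)
    (h₂ : T.res (imageIncl f) s = T.res (imageIncl f) t) : s = t := by
  obtain ⟨m, hm⟩ := exists_section_complSumImage f
  have key (u : T.obj Y) : T.res m (T.res (complSumImage f) u) = u := by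
    rw [T.res_comp, hm, T.res_id]
  rw [← key s, ← key t]
  congr 1
  refine (T.add_bij _ _).injective (Prod.ext ?_ ?_)
  · simp only [T.res_comp]; exact h₁
  · simp only [T.res_comp]; exact h₂

theorem tr_res_complIncl_add_tr_res_imageIncl {X Y : GSet G} (f : GSetHom X Y) (s : T.obj Y) :
    T.tr (complIncl f) (T.res (complIncl f) s) +
      T.tr (imageIncl f) (T.res (imageIncl f) s) = s := by
  apply T.eq_of_res_complIncl_eq_of_res_imageIncl_eq f
  · rw [map_add, res_complIncl_tr_complIncl, res_complIncl_tr_imageIncl, add_zero]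
  · rw [map_add, res_imageIncl_tr_complIncl, res_complIncl_tr_complIncl, zero_add]

variable {I : ∀ X : GSet G, Ideal (T.obj X)}


theorem IsIdeal.nm_mem_of_surjective (hI : T.IsIdeal I) {X Y : GSet G} (f : GSetHom X Y)
    (hf : Function.Surjective f.toFun) {a : T.obj X} (ha : a ∈ I X) : T.nm f a ∈ I Y := by
  simpa [shriek, T.nm_zero_of_surjective f hf] using hI.shriek_mem f ha

theorem IsIdeal.mem_of_res_complIncl_mem_of_res_imageIncl_mem (hI : T.IsIdeal I)
    {X Y : GSet G} (f : GSetHom X Y) {s : T.obj Y} (h₁ : T.res (complIncl f) s ∈ I _)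
    (h₂ : T.res (imageIncl f) s ∈ I _) : s ∈ I Y := by
  rw [← T.tr_res_complIncl_add_tr_res_imageIncl f s]
  exact add_mem (hI.tr_mem _ h₁) (hI.tr_mem _ h₂)

theorem IsIdeal.mem_of_res_inl_mem_of_res_inr_mem (hI : T.IsIdeal I) {A B : GSet G}
    {s : T.obj (A.sum B)} (hA : T.res (inl A B) s ∈ I A) (hB : T.res (inr A B) s ∈ I B) :
    s ∈ I (A.sum B) := by
  obtain ⟨mA, hmA⟩ := (inl A B).exists_comp_eq (inl_injective A B) (complIncl (inr A B))
    fun ⟨y, hy⟩ => by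
      cases y with
      | inl a => exact ⟨a, rfl⟩
      | inr b => exact absurd rfl (hy b)
  obtain ⟨mB, hmB⟩ := (inr A B).exists_comp_eq (inr_injective A B) (imageIncl (inr A B))
    (exists_eq_imageIncl _)
  refine hI.mem_of_res_complIncl_mem_of_res_imageIncl_mem T (inr A B) ?_ ?_
  · rw [← hmA, ← T.res_comp]; exact hI.res_mem _ hA
  · rw [← hmB, ← T.res_comp]; exact hI.res_mem _ hB

/-- The pullback of `f` along its image inclusion is bijective onto both `X` and `image f`;
this transports `b` to `X`. -/
theorem IsIdeal.exists_mem_nm_eq (hI : T.IsIdeal I) {X Y : GSet G} (f : GSetHom X Y)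
    (hf : Function.Injective f.toFun) {b : T.obj (image f)} (hb : b ∈ I _) :
    ∃ a ∈ I X, T.nm f a = T.nm f 0 + T.tr (imageIncl f) b := by
  have hfst : Function.Bijective (pbFst f (imageIncl f)).toFun := by
    refine ⟨?_, fun x => ?_⟩
    · rintro ⟨⟨x, y⟩, hxy⟩ ⟨⟨x', y'⟩, hxy'⟩ (rfl : x = x')
      obtain rfl : y = y' := Subtype.ext (hxy.symm.trans hxy')
      rfl
    · exact ⟨⟨(x, ⟨f.toFun x, fun y hy => y.property x hy.symm⟩), rfl⟩, rfl⟩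
  have hsnd : Function.Bijective (pbSnd f (imageIncl f)).toFun := by
    refine ⟨pbSnd_injective hf _, fun y => ?_⟩
    obtain ⟨x, hx⟩ := exists_eq_imageIncl f y
    exact ⟨⟨(x, y), hx⟩, rfl⟩
  obtain ⟨φ, -, hφ⟩ := (pbFst f (imageIncl f)).exists_inverse hfst
  obtain ⟨ψ, hψ, hψ'⟩ := (pbSnd f (imageIncl f)).exists_inverse hsnd
  have hψsurj : Function.Surjective ψ.toFun := fun p => ⟨_, congrArg (·.toFun p) hψ'⟩
  refine ⟨T.res φ (T.nm ψ b), hI.res_mem _ (hI.nm_mem_of_surjective T ψ hψsurj hb), ?_⟩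
  apply T.eq_of_res_complIncl_eq_of_res_imageIncl_eq f
  · rw [map_add, res_nm_of_disjoint _ (complIncl_ne f), res_nm_of_disjoint _ (complIncl_ne f),
      res_complIncl_tr_imageIncl, add_zero]
  · rw [map_add, T.nm_zero, res_imageIncl_tr_complIncl, res_complIncl_tr_complIncl, zero_add,
      T.nm_bc, T.res_comp, hφ, T.res_id, T.nm_comp, hψ, T.nm_id]

/-- With the complementary idempotents `e₁ = h_•(0)` and `e₂` supported on the image of `h`,
`ρ = (e₁ ρ + e₂) (e₁ + e₂ ρ)`, and the second factor is a norm along `h` of an element of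
the ideal. -/
theorem IsIdeal.nm_mem_of_res_mem (hI : T.IsIdeal I) {W Z B : GSet G} (g : GSetHom Z B)
    (h : GSetHom W Z) (hh : Function.Injective h.toFun)
    (hgh : Function.Surjective (g.comp h).toFun) {ρ : T.obj Z} (hρ : T.res h ρ ∈ I W) :
    T.nm g ρ ∈ I B := by
  obtain ⟨m, hm⟩ := h.exists_comp_eq hh (imageIncl h) (exists_eq_imageIncl h)
  have hρ' : T.res (imageIncl h) ρ ∈ I _ := by
    rw [← hm, ← T.res_comp]; exact hI.res_mem _ hρ
  obtain ⟨a, ha, hnm⟩ := hI.exists_mem_nm_eq T h hh hρ'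
  have hsum : T.nm h 0 + T.tr (imageIncl h) 1 = 1 := by
    have := T.tr_res_complIncl_add_tr_res_imageIncl h 1
    rwa [map_one (T.res _), map_one (T.res _), ← T.nm_zero] at this
  have hprod : T.nm h 0 * T.tr (imageIncl h) 1 = 0 := by
    rw [mul_tr_one, T.nm_zero, res_imageIncl_tr_complIncl, map_zero]
  have hfactor : ρ = (T.nm h 0 * ρ + T.tr (imageIncl h) 1) * T.nm h a := by
    rw [hnm, ← mul_tr_one]
    linear_combination -(ρ - 1) ^ 2 * hprod - ρ * (T.nm h 0 + T.tr (imageIncl h) 1 + 1) * hsum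
  rw [hfactor, map_mul, T.nm_comp]
  exact Ideal.mul_mem_left _ _ (hI.nm_mem_of_surjective T _ hgh ha)


theorem res_inr_tr_inl {X Y : GSet G} (a : T.obj X) : T.res (inr X Y) (T.tr (inl X Y) a) = 0 :=
  T.res_tr_of_disjoint (fun _ _ => Sum.inl_ne_inr) a

theorem IsIdeal.res_imageIncl_nm_mem (hI : T.IsIdeal I) {N Z V : GSet G} (g : GSetHom Z V)
    {s : GSetHom N Z} (hs : Function.Injective s.toFun) {ρ : T.obj Z} (hρ : T.res s ρ ∈ I N) :
    T.res (imageIncl (g.comp s)) (T.nm g ρ) ∈ I _ := by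
  rw [T.nm_bc]
  refine hI.nm_mem_of_res_mem T _ (pbSnd s (pbFst g (imageIncl (g.comp s))))
    (pbSnd_injective hs _) (fun y => ?_) ?_
  · obtain ⟨n, hn⟩ := exists_eq_imageIncl (g.comp s) y
    exact ⟨⟨(n, ⟨(s.toFun n, y), hn⟩), rfl⟩, rfl⟩
  · rw [T.res_comp, ← pullback_condition, ← T.res_comp]
    exact hI.res_mem _ hρ

/-- Over the points of `V` hit by `g ∘ s` both norms lie in the ideal; elsewhere they agree. -/
theorem IsIdeal.nm_sub_nm_mem_of_res (hI : T.IsIdeal I) {N Z V : GSet G} (g : GSetHom Z V)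
    {s : GSetHom N Z} (hs : Function.Injective s.toFun) {ρ ρ' : T.obj Z}
    (hoff : T.res (complIncl s) ρ = T.res (complIncl s) ρ') (hρ : T.res s ρ ∈ I N)
    (hρ' : T.res s ρ' ∈ I N) : T.nm g ρ - T.nm g ρ' ∈ I V := by
  refine hI.mem_of_res_complIncl_mem_of_res_imageIncl_mem T (g.comp s) ?_ ?_
  · obtain ⟨m, hm⟩ := (complIncl s).exists_comp_eq (complIncl_injective s)
      (pbFst g (complIncl (g.comp s)))
      fun p => ⟨⟨p.val.1, fun n hn =>
        p.val.2.property n ((congrArg g.toFun hn).trans p.property)⟩, rfl⟩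
    rw [map_sub, T.nm_bc, T.nm_bc, ← hm, ← T.res_comp, ← T.res_comp, hoff, sub_self]
    exact zero_mem _
  · rw [map_sub]
    exact sub_mem (hI.res_imageIncl_nm_mem T g hs hρ) (hI.res_imageIncl_nm_mem T g hs hρ')

theorem IsIdeal.nm_add_sub_nm_mem (hI : T.IsIdeal I) {X Y : GSet G} (f : GSetHom X Y)
    (x : T.obj X) {d : T.obj X} (hd : d ∈ I X) : T.nm f (x + d) - T.nm f x ∈ I Y := by
  have hx : T.tr (fold X) (T.tr (inl X X) x) = x := by rw [T.tr_comp, fold_comp_inl, T.tr_id]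
  have hd' : T.tr (fold X) (T.tr (inr X X) d) = d := by rw [T.tr_comp, fold_comp_inr, T.tr_id]
  rw [← hx, ← hd', ← map_add, T.distrib, T.distrib, ← map_sub]
  set ev := piEval f (fold X)
  have hs := pbSnd_injective (inr_injective X X) ev
  have hres (c : T.obj (X.sum X)) :
      T.res (pbSnd (inr X X) ev) (T.res ev c) = T.res (pbFst (inr X X) ev) (T.res (inr X X) c) := by
    rw [T.res_comp, T.res_comp, pullback_condition]
  have hoff : T.res (complIncl (pbSnd (inr X X) ev)) (T.res ev (T.tr (inr X X) d)) = 0 := by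
    rw [T.res_comp]
    refine T.res_tr_of_disjoint (fun b z h => ?_) d
    exact z.property ⟨(b, z.val), h⟩ rfl
  refine hI.tr_mem _ (hI.nm_sub_nm_mem_of_res T _ hs ?_ ?_ ?_)
  · rw [map_add, map_add, hoff, add_zero]
  · rw [hres, map_add, res_inr_tr_inl, zero_add]
    exact hI.res_mem _ (hI.res_mem _ (hI.tr_mem _ hd))
  · rw [hres, res_inr_tr_inl, map_zero]
    exact zero_mem _

theorem IsIdeal.nm_sub_nm_mem (hI : T.IsIdeal I) {X Y : GSet G} (f : GSetHom X Y)
    {x y : T.obj X} (hxy : x - y ∈ I X) : T.nm f x - T.nm f y ∈ I Y := by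
  simpa using hI.nm_add_sub_nm_mem T f y hxy

variable (hI : T.IsIdeal I)

noncomputable def quotientTr {X Y : GSet G} (f : GSetHom X Y) :
    (T.obj X ⧸ I X) →+ (T.obj Y ⧸ I Y) where
  toFun := Quotient.map' (T.tr f) fun a b hab => by
    rw [Submodule.quotientRel_def] at hab ⊢
    rw [← map_sub]
    exact hI.tr_mem f hab
  map_zero' := congrArg (Ideal.Quotient.mk _) (map_zero (T.tr f))
  map_add' p q := by
    obtain ⟨a, rfl⟩ := Ideal.Quotient.mk_surjective p
    obtain ⟨b, rfl⟩ := Ideal.Quotient.mk_surjective q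
    exact congrArg (Ideal.Quotient.mk _) (map_add (T.tr f) a b)

noncomputable def quotientNm {X Y : GSet G} (f : GSetHom X Y) :
    (T.obj X ⧸ I X) →* (T.obj Y ⧸ I Y) where
  toFun := Quotient.map' (T.nm f) fun a b hab => by
    rw [Submodule.quotientRel_def] at hab ⊢
    exact hI.nm_sub_nm_mem T f hab
  map_one' := congrArg (Ideal.Quotient.mk _) (map_one (T.nm f))
  map_mul' p q := by
    obtain ⟨a, rfl⟩ := Ideal.Quotient.mk_surjective p
    obtain ⟨b, rfl⟩ := Ideal.Quotient.mk_surjective q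
    exact congrArg (Ideal.Quotient.mk _) (map_mul (T.nm f) a b)

@[simp]
theorem quotientTr_mk {X Y : GSet G} (f : GSetHom X Y) (a : T.obj X) :
    T.quotientTr hI f (Ideal.Quotient.mk _ a) = Ideal.Quotient.mk _ (T.tr f a) := rfl

@[simp]
theorem quotientNm_mk {X Y : GSet G} (f : GSetHom X Y) (a : T.obj X) :
    T.quotientNm hI f (Ideal.Quotient.mk _ a) = Ideal.Quotient.mk _ (T.nm f a) := rfl

noncomputable def quotient : TambaraFunctor G where
  obj X := T.obj X ⧸ I X
  ring _ := inferInstance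
  res f := Ideal.quotientMap _ (T.res f) fun _ ha => Ideal.mem_comap.mpr (hI.res_mem f ha)
  tr := T.quotientTr hI
  nm := T.quotientNm hI
  res_id q := by
    obtain ⟨a, rfl⟩ := Ideal.Quotient.mk_surjective q
    simp [T.res_id]
  res_comp f g q := by
    obtain ⟨a, rfl⟩ := Ideal.Quotient.mk_surjective q
    simp [T.res_comp]
  tr_id q := by
    obtain ⟨a, rfl⟩ := Ideal.Quotient.mk_surjective q
    simp [T.tr_id]
  tr_comp f g q := by
    obtain ⟨a, rfl⟩ := Ideal.Quotient.mk_surjective q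
    simp [T.tr_comp]
  nm_id q := by
    obtain ⟨a, rfl⟩ := Ideal.Quotient.mk_surjective q
    simp [T.nm_id]
  nm_comp f g q := by
    obtain ⟨a, rfl⟩ := Ideal.Quotient.mk_surjective q
    simp [T.nm_comp]
  add_bij A B := by
    refine ⟨fun p q hpq => ?_, fun ⟨p, q⟩ => ?_⟩
    · obtain ⟨a, rfl⟩ := Ideal.Quotient.mk_surjective p
      obtain ⟨b, rfl⟩ := Ideal.Quotient.mk_surjective q
      simp only [Ideal.quotientMap_mk, Prod.mk.injEq, Ideal.Quotient.eq, ← map_sub] at hpq ⊢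
      exact hI.mem_of_res_inl_mem_of_res_inr_mem T hpq.1 hpq.2
    · obtain ⟨a, rfl⟩ := Ideal.Quotient.mk_surjective p
      obtain ⟨b, rfl⟩ := Ideal.Quotient.mk_surjective q
      obtain ⟨c, hc⟩ := (T.add_bij A B).2 (a, b)
      obtain ⟨rfl, rfl⟩ := Prod.mk.inj hc
      exact ⟨Ideal.Quotient.mk _ c, rfl⟩
  empty_subsingleton p q := by
    obtain ⟨a, rfl⟩ := Ideal.Quotient.mk_surjective p
    obtain ⟨b, rfl⟩ := Ideal.Quotient.mk_surjective q
    rw [T.empty_subsingleton a b]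
  tr_bc f g q := by
    obtain ⟨a, rfl⟩ := Ideal.Quotient.mk_surjective q
    simp [T.tr_bc]
  nm_bc f g q := by
    obtain ⟨a, rfl⟩ := Ideal.Quotient.mk_surjective q
    simp [T.nm_bc]
  proj_formula f p q := by
    obtain ⟨a, rfl⟩ := Ideal.Quotient.mk_surjective p
    obtain ⟨b, rfl⟩ := Ideal.Quotient.mk_surjective q
    simp only [Ideal.quotientMap_mk, ← map_mul, quotientTr_mk, T.proj_formula]
  nm_zero f := by
    rw [← map_zero (Ideal.Quotient.mk (I _)), ← map_one (Ideal.Quotient.mk (I _))]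
    simp only [quotientNm_mk, quotientTr_mk, T.nm_zero]
  distrib f p q := by
    obtain ⟨a, rfl⟩ := Ideal.Quotient.mk_surjective q
    simp [T.distrib]

noncomputable def toQuotient : TamHom T (T.quotient hI) where
  app X := Ideal.Quotient.mk (I X)
  app_res _ _ := rfl
  app_tr _ _ := rfl
  app_nm _ _ := rfl

end TambaraFunctor

theorem quotient_tambara_general (G : Type) [Group G] (T : TambaraFunctor G)
    (I : ∀ X : GSet G, Ideal (T.obj X)) (hI : T.IsIdeal I) :
    (∀ {X Y : GSet G} (f : GSetHom X Y) (x y : T.obj X),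
        x - y ∈ I X → T.nm f x - T.nm f y ∈ I Y) ∧
    ∃ (Q : TambaraFunctor G) (p : TamHom T Q),
      (∀ X : GSet G, Function.Surjective (p.app X)) ∧
      (∀ (X : GSet G) (x : T.obj X), p.app X x = 0 ↔ x ∈ I X) :=
  ⟨fun f _ _ => hI.nm_sub_nm_mem T f, T.quotient hI, T.toQuotient hI,
    fun _ => Ideal.Quotient.mk_surjective, fun _ _ => Ideal.Quotient.eq_zero_iff_mem⟩

/-- the quotient of a Tambara functor by an ideal is a Tambara functor, the
projections form a morphism of Tambara functors, and in particular the induced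
multiplicative transfer `f_•(x + 𝔦(X)) = f_•(x) + 𝔦(Y)` is well defined. -/
theorem quotient_tambara (G : Type) [Group G] [Finite G] (T : TambaraFunctor G)
    (I : ∀ X : GSet G, Ideal (T.obj X)) (hI : T.IsIdeal I) :
    (∀ {X Y : GSet G} (f : GSetHom X Y) (x y : T.obj X),
        x - y ∈ I X → T.nm f x - T.nm f y ∈ I Y) ∧
    ∃ (Q : TambaraFunctor G) (p : TamHom T Q),
      (∀ X : GSet G, Function.Surjective (p.app X)) ∧
      (∀ (X : GSet G) (x : T.obj X), p.app X x = 0 ↔ x ∈ I X) :=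
  quotient_tambara_general G T I hI
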